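/- Let (a_i)_{i≥1} and (b_i)_{i≥1} be sequences of real numbers such that a_i + b_j > −1 for all i,j ≥ 1, a_i ≠ a_j for i ≠ j, and b_i ≠ b_j for i ≠ j. For n ≥ 1 define the functions on (0,1): ζ_n(x) = √(a_n+b_n+1) · Σ_{i=1}^n [∏_{k=1}^{n−1} (a_i+b_k+1) / ∏_{1≤k≤n, k≠i} (a_i−a_k)] · x^{a_i} and ψ_n(x) = √(a_n+b_n+1) · Σ_{i=1}^n [∏_{k=1}^{n−1} (b_i+a_k+1) / ∏_{1≤k≤n, k≠i} (b_i−b_k)] · x^{b_i}. Then these systems are biorthonormal in L²((0,1), dx): ∫_0^1 ζ_m(x) ψ_n(x) dx = δ_{mn} for all m, n ≥ 1. -/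
import Mathlib

open MeasureTheory


open Polynomial Finset in
lemma lagrange_frac {s : Finset ℕ} {v : ℕ → ℝ} (hv : Set.InjOn v s)
    (P : Polynomial ℝ) (hdeg : P.degree < s.card) {t : ℝ} (ht : ∀ j ∈ s, t ≠ v j) :
    ∑ j ∈ s, P.eval (v j) / ((∏ k ∈ s.erase j, (v j - v k)) * (t - v j))
      = P.eval t / ∏ k ∈ s, (t - v k) := by
  have hQ : ∀ j ∈ s, t - v j ≠ 0 := fun j hj => sub_ne_zero.2 (ht j hj)
  have hb : ∀ j ∈ s, Polynomial.eval t (Lagrange.basis s v j)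
      = (∏ k ∈ s.erase j, (t - v k)) / (∏ k ∈ s.erase j, (v j - v k)) := by
    intro j hj
    rw [Lagrange.basis, Polynomial.eval_prod, ← Finset.prod_div_distrib]
    refine Finset.prod_congr rfl fun k hk => ?_
    simp [Lagrange.basisDivisor, div_eq_inv_mul]
  have key := Lagrange.eq_interpolate hv hdeg
  have hevalt : P.eval t = ∑ j ∈ s, P.eval (v j) * Polynomial.eval t (Lagrange.basis s v j) := by
    conv_lhs => rw [key]
    simp [Lagrange.interpolate_apply, Polynomial.eval_finset_sum]
  rw [hevalt, Finset.sum_div]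
  refine Finset.sum_congr rfl fun j hj => ?_
  have hd : (∏ k ∈ s.erase j, (v j - v k)) ≠ 0 :=
    Finset.prod_ne_zero_iff.2 fun k hk => sub_ne_zero.2
      (hv.ne hj (Finset.mem_of_mem_erase hk) (Finset.ne_of_mem_erase hk).symm)
  have hq : (∏ k ∈ s.erase j, (t - v k)) ≠ 0 :=
    Finset.prod_ne_zero_iff.2 fun k hk => hQ k (Finset.mem_of_mem_erase hk)
  have htj := hQ j hj
  rw [hb j hj, ← Finset.mul_prod_erase s _ hj]
  field_simp

open Polynomial Finset in
lemma key_sum (u w : ℕ → ℝ) (n : ℕ) (hn : 1 ≤ n)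
    (hw : ∀ j k, 1 ≤ j → j ≤ n → 1 ≤ k → k ≤ n → j ≠ k → w j ≠ w k)
    (t : ℝ) (ht : ∀ j, 1 ≤ j → j ≤ n → t + w j + 1 ≠ 0) :
    ∑ j ∈ Finset.Icc 1 n,
      ((∏ k ∈ Finset.Icc 1 (n-1), (w j + u k + 1)) /
          ∏ k ∈ (Finset.Icc 1 n).erase j, (w j - w k)) * (1/(t + w j + 1))
    = (∏ k ∈ Finset.Icc 1 (n-1), (t - u k)) / ∏ k ∈ Finset.Icc 1 n, (t + w k + 1) := by
  set P : Polynomial ℝ := ∏ k ∈ Finset.Icc 1 (n-1), (X + C (u k + 1)) with hP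
  have hcard : (Finset.Icc 1 n).card = n := by simp [Nat.card_Icc]
  have hcard' : (Finset.Icc 1 (n-1)).card = n - 1 := by simp [Nat.card_Icc]
  have hdeg : P.degree < (Finset.Icc 1 n).card := by
    have h1 : P.natDegree ≤ n - 1 := by
      rw [hP]
      refine le_trans (Polynomial.natDegree_prod_le _ _) ?_
      rw [← hcard']
      refine le_trans (Finset.sum_le_card_nsmul _ _ 1 fun k _ => ?_) (by simp)
      exact le_of_eq (Polynomial.natDegree_X_add_C _)
    calc P.degree ≤ P.natDegree := Polynomial.degree_le_natDegree
    _ < ((Finset.Icc 1 n).card : WithBot ℕ) := by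
        rw [hcard]; exact_mod_cast Nat.lt_of_le_of_lt h1 (by omega)
  have hv : Set.InjOn w (Finset.Icc 1 n) := by
    intro x hx y hy hxy
    simp only [Finset.coe_Icc, Set.mem_Icc] at hx hy
    by_contra hne
    exact hw x y hx.1 hx.2 hy.1 hy.2 hne hxy
  have ht' : ∀ j ∈ Finset.Icc 1 n, (-t-1 : ℝ) ≠ w j := by
    intro j hj heq
    rw [Finset.mem_Icc] at hj
    exact ht j hj.1 hj.2 (by linarith [heq])
  have L := lagrange_frac hv P hdeg ht'
  have e1 : ∀ j, Polynomial.eval (w j) P = ∏ k ∈ Finset.Icc 1 (n-1), (w j + u k + 1) := by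
    intro j
    simp only [hP, Polynomial.eval_prod, Polynomial.eval_add, Polynomial.eval_X,
      Polynomial.eval_C]
    exact Finset.prod_congr rfl fun k _ => by ring
  have e2 : Polynomial.eval (-t-1) P
      = (-1 : ℝ)^(n-1) * ∏ k ∈ Finset.Icc 1 (n-1), (t - u k) := by
    simp only [hP, Polynomial.eval_prod, Polynomial.eval_add, Polynomial.eval_X,
      Polynomial.eval_C]
    calc ∏ k ∈ Finset.Icc 1 (n-1), (-t - 1 + (u k + 1))
        = ∏ k ∈ Finset.Icc 1 (n-1), (-1 : ℝ) * (t - u k) :=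
          Finset.prod_congr rfl fun k _ => by ring
      _ = (-1 : ℝ)^(n-1) * ∏ k ∈ Finset.Icc 1 (n-1), (t - u k) := by
          rw [Finset.prod_mul_distrib, Finset.prod_const, hcard']
  have e3 : ∏ k ∈ Finset.Icc 1 n, ((-t-1) - w k)
      = (-1 : ℝ)^n * ∏ k ∈ Finset.Icc 1 n, (t + w k + 1) := by
    calc ∏ k ∈ Finset.Icc 1 n, ((-t-1) - w k)
        = ∏ k ∈ Finset.Icc 1 n, (-1 : ℝ) * (t + w k + 1) :=
          Finset.prod_congr rfl fun k _ => by ring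
      _ = (-1 : ℝ)^n * ∏ k ∈ Finset.Icc 1 n, (t + w k + 1) := by
          rw [Finset.prod_mul_distrib, Finset.prod_const, hcard]
  have step : ∑ j ∈ Finset.Icc 1 n,
      ((∏ k ∈ Finset.Icc 1 (n-1), (w j + u k + 1)) /
          ∏ k ∈ (Finset.Icc 1 n).erase j, (w j - w k)) * (1/(t + w j + 1))
      = -∑ j ∈ Finset.Icc 1 n,
          P.eval (w j) / ((∏ k ∈ (Finset.Icc 1 n).erase j, (w j - w k)) * ((-t-1) - w j)) := by
    rw [← Finset.sum_neg_distrib]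
    refine Finset.sum_congr rfl fun j hj => ?_
    rw [e1 j, div_mul_div_comm, mul_one,
      show (-t-1) - w j = -(t + w j + 1) from by ring, mul_neg, div_neg, neg_neg]
  rw [step, L, e2, e3]
  have hY : (∏ k ∈ Finset.Icc 1 n, (t + w k + 1)) ≠ 0 :=
    Finset.prod_ne_zero_iff.2 fun k hk => by
      rw [Finset.mem_Icc] at hk; exact ht k hk.1 hk.2
  have hpow : (-1 : ℝ)^n = (-1)^(n-1) * (-1) := by
    rw [← pow_succ]; congr 1; omega
  have hc : ((-1 : ℝ))^(n-1) ≠ 0 := pow_ne_zero _ (by norm_num)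
  rw [hpow]
  field_simp

/-- **Biorthonormal systems of general power functions on `(0,1)`.**
Given sequences `a`, `b` (indexed from `1`) with `a i + b j > -1` and pairwise
distinct `a`'s and `b`'s, the explicit systems `ζ n` and `ψ n` are biorthonormal
in `L²((0,1), dx)`. -/
theorem biorthonormal_power_systems (a b : ℕ → ℝ)
    (hab : ∀ i j, 1 ≤ i → 1 ≤ j → -1 < a i + b j)
    (ha : ∀ i j, 1 ≤ i → 1 ≤ j → i ≠ j → a i ≠ a j)
    (hb : ∀ i j, 1 ≤ i → 1 ≤ j → i ≠ j → b i ≠ b j) :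
    ∀ m n : ℕ, 1 ≤ m → 1 ≤ n →
      (∫ x in Set.Ioo (0 : ℝ) 1,
        (Real.sqrt (a m + b m + 1) *
          ∑ i ∈ Finset.Icc 1 m,
            ((∏ k ∈ Finset.Icc 1 (m - 1), (a i + b k + 1)) /
              ∏ k ∈ (Finset.Icc 1 m).erase i, (a i - a k)) * x ^ a i) *
        (Real.sqrt (a n + b n + 1) *
          ∑ i ∈ Finset.Icc 1 n,
            ((∏ k ∈ Finset.Icc 1 (n - 1), (b i + a k + 1)) /
              ∏ k ∈ (Finset.Icc 1 n).erase i, (b i - b k)) * x ^ b i))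
      = if m = n then 1 else 0 := by
  intro m n hm hn
  have hrpos : ∀ i j, 1 ≤ i → 1 ≤ j → (0:ℝ) < a i + b j + 1 := fun i j hi hj => by
    linarith [hab i j hi hj]
  have hA : ∀ r : ℝ, -1 < r → ∫ x in Set.Ioo (0:ℝ) 1, x ^ r = 1/(r+1) := by
    intro r hr
    rw [← MeasureTheory.integral_Ioc_eq_integral_Ioo,
      ← intervalIntegral.integral_of_le (zero_le_one), integral_rpow (Or.inl hr)]
    rw [Real.one_rpow, Real.zero_rpow (by linarith)]
    norm_num
  have hInt : ∀ r : ℝ, -1 < r →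
      MeasureTheory.IntegrableOn (fun x : ℝ => x ^ r) (Set.Ioo 0 1) :=
    fun r hr => ((intervalIntegral.intervalIntegrable_rpow' (a := 0) (b := 1) hr).1).mono_set
      Set.Ioo_subset_Ioc_self
  have heqon : Set.EqOn
      (fun x : ℝ =>
        (Real.sqrt (a m + b m + 1) *
          ∑ i ∈ Finset.Icc 1 m,
            ((∏ k ∈ Finset.Icc 1 (m - 1), (a i + b k + 1)) /
              ∏ k ∈ (Finset.Icc 1 m).erase i, (a i - a k)) * x ^ a i) *
        (Real.sqrt (a n + b n + 1) *
          ∑ i ∈ Finset.Icc 1 n,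
            ((∏ k ∈ Finset.Icc 1 (n - 1), (b i + a k + 1)) /
              ∏ k ∈ (Finset.Icc 1 n).erase i, (b i - b k)) * x ^ b i))
      (fun x : ℝ =>
        Real.sqrt (a m + b m + 1) * Real.sqrt (a n + b n + 1) *
          ∑ i ∈ Finset.Icc 1 m, ∑ j ∈ Finset.Icc 1 n,
            (((∏ k ∈ Finset.Icc 1 (m - 1), (a i + b k + 1)) /
                ∏ k ∈ (Finset.Icc 1 m).erase i, (a i - a k)) *
              ((∏ k ∈ Finset.Icc 1 (n - 1), (b j + a k + 1)) /
                ∏ k ∈ (Finset.Icc 1 n).erase j, (b j - b k))) * x ^ (a i + b j))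
      (Set.Ioo 0 1) := by
    intro x hx
    obtain ⟨hx0, _⟩ := hx
    simp only
    rw [mul_mul_mul_comm]
    congr 1
    rw [Finset.sum_mul_sum]
    refine Finset.sum_congr rfl fun i _ => Finset.sum_congr rfl fun j _ => ?_
    rw [Real.rpow_add hx0]
    ring
  rw [MeasureTheory.setIntegral_congr_fun measurableSet_Ioo heqon,
    MeasureTheory.integral_const_mul]
  rw [MeasureTheory.integral_finset_sum _ (fun i hi => ?hint1)]
  case hint1 =>
    exact MeasureTheory.integrable_finset_sum _ fun j hj =>
      (hInt _ (hab i j (Finset.mem_Icc.1 hi).1 (Finset.mem_Icc.1 hj).1)).const_mul _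
  have step2 : ∀ i ∈ Finset.Icc 1 m,
      (∫ x in Set.Ioo (0:ℝ) 1, ∑ j ∈ Finset.Icc 1 n,
        (((∏ k ∈ Finset.Icc 1 (m - 1), (a i + b k + 1)) /
            ∏ k ∈ (Finset.Icc 1 m).erase i, (a i - a k)) *
          ((∏ k ∈ Finset.Icc 1 (n - 1), (b j + a k + 1)) /
            ∏ k ∈ (Finset.Icc 1 n).erase j, (b j - b k))) * x ^ (a i + b j))
      = ((∏ k ∈ Finset.Icc 1 (m - 1), (a i + b k + 1)) /
            ∏ k ∈ (Finset.Icc 1 m).erase i, (a i - a k)) *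
        ∑ j ∈ Finset.Icc 1 n,
          ((∏ k ∈ Finset.Icc 1 (n - 1), (b j + a k + 1)) /
            ∏ k ∈ (Finset.Icc 1 n).erase j, (b j - b k)) * (1 / (a i + b j + 1)) := by
    intro i hi
    rw [MeasureTheory.integral_finset_sum _ (fun j hj =>
      (hInt _ (hab i j (Finset.mem_Icc.1 hi).1 (Finset.mem_Icc.1 hj).1)).const_mul _),
      Finset.mul_sum]
    refine Finset.sum_congr rfl fun j hj => ?_
    rw [MeasureTheory.integral_const_mul,
      hA _ (hab i j (Finset.mem_Icc.1 hi).1 (Finset.mem_Icc.1 hj).1)]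
    ring
  rw [Finset.sum_congr rfl step2]
  -- inner-sum evaluation
  have hS : ∀ i, 1 ≤ i →
      (∑ j ∈ Finset.Icc 1 n,
        ((∏ k ∈ Finset.Icc 1 (n - 1), (b j + a k + 1)) /
          ∏ k ∈ (Finset.Icc 1 n).erase j, (b j - b k)) * (1 / (a i + b j + 1)))
      = (∏ k ∈ Finset.Icc 1 (n-1), (a i - a k)) /
          ∏ k ∈ Finset.Icc 1 n, (a i + b k + 1) :=
    fun i hi => key_sum a b n hn (fun j k hj1 _ hk1 _ hne => hb j k hj1 hk1 hne) (a i)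
      (fun j hj1 _ => ne_of_gt (hrpos i j hi hj1))
  rcases lt_trichotomy m n with hlt | heq | hgt
  · rw [if_neg (Nat.ne_of_lt hlt)]
    have hz : ∑ i ∈ Finset.Icc 1 m,
        ((∏ k ∈ Finset.Icc 1 (m - 1), (a i + b k + 1)) /
            ∏ k ∈ (Finset.Icc 1 m).erase i, (a i - a k)) *
          ∑ j ∈ Finset.Icc 1 n,
            ((∏ k ∈ Finset.Icc 1 (n - 1), (b j + a k + 1)) /
              ∏ k ∈ (Finset.Icc 1 n).erase j, (b j - b k)) * (1 / (a i + b j + 1)) = 0 := by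
      refine Finset.sum_eq_zero fun i hi => ?_
      rw [Finset.mem_Icc] at hi
      have h0 : (∏ k ∈ Finset.Icc 1 (n-1), (a i - a k)) = 0 :=
        Finset.prod_eq_zero (show i ∈ Finset.Icc 1 (n-1) from
          Finset.mem_Icc.2 ⟨hi.1, by omega⟩) (sub_self (a i))
      rw [hS i hi.1, h0, zero_div, mul_zero]
    rw [hz, mul_zero]
  · subst heq
    rw [if_pos rfl]
    have hz : ∑ i ∈ Finset.Icc 1 m,
        ((∏ k ∈ Finset.Icc 1 (m - 1), (a i + b k + 1)) /
            ∏ k ∈ (Finset.Icc 1 m).erase i, (a i - a k)) *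
          ∑ j ∈ Finset.Icc 1 m,
            ((∏ k ∈ Finset.Icc 1 (m - 1), (b j + a k + 1)) /
              ∏ k ∈ (Finset.Icc 1 m).erase j, (b j - b k)) * (1 / (a i + b j + 1))
        = 1 / (a m + b m + 1) := by
      rw [Finset.sum_eq_single_of_mem m (Finset.mem_Icc.2 ⟨hm, le_refl m⟩)
        (fun i hi hne => ?zero)]
      case zero =>
        rw [Finset.mem_Icc] at hi
        have h0 : (∏ k ∈ Finset.Icc 1 (m-1), (a i - a k)) = 0 :=
          Finset.prod_eq_zero (show i ∈ Finset.Icc 1 (m-1) from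
            Finset.mem_Icc.2 ⟨hi.1, by omega⟩) (sub_self (a i))
        rw [hS i hi.1, h0, zero_div, mul_zero]
      rw [hS m hm]
      have herase : (Finset.Icc 1 m).erase m = Finset.Icc 1 (m-1) := by
        ext k; simp only [Finset.mem_erase, Finset.mem_Icc]; omega
      have h1 : m = m - 1 + 1 := by omega
      have hsplit : ∏ k ∈ Finset.Icc 1 m, (a m + b k + 1)
          = (∏ k ∈ Finset.Icc 1 (m-1), (a m + b k + 1)) * (a m + b m + 1) := by
        calc ∏ k ∈ Finset.Icc 1 m, (a m + b k + 1)
            = ∏ k ∈ Finset.Icc 1 (m-1+1), (a m + b k + 1) := by rw [← h1]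
          _ = (∏ k ∈ Finset.Icc 1 (m-1), (a m + b k + 1)) * (a m + b (m-1+1) + 1) :=
              Finset.prod_Icc_succ_top (by omega) _
          _ = (∏ k ∈ Finset.Icc 1 (m-1), (a m + b k + 1)) * (a m + b m + 1) := by rw [← h1]
      rw [herase, hsplit]
      have hX : (∏ k ∈ Finset.Icc 1 (m-1), (a m - a k)) ≠ 0 :=
        Finset.prod_ne_zero_iff.2 fun k hk => by
          rw [Finset.mem_Icc] at hk
          exact sub_ne_zero.2 (ha m k hm hk.1 (by omega))
      have hY : (∏ k ∈ Finset.Icc 1 (m-1), (a m + b k + 1)) ≠ 0 :=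
        Finset.prod_ne_zero_iff.2 fun k hk => by
          rw [Finset.mem_Icc] at hk
          exact ne_of_gt (hrpos m k hm hk.1)
      have hAm : (a m + b m + 1) ≠ 0 := ne_of_gt (hrpos m m hm hm)
      field_simp
    rw [hz, Real.mul_self_sqrt (le_of_lt (hrpos m m hm hm)), mul_one_div]
    exact div_self (ne_of_gt (hrpos m m hm hm))
  · rw [if_neg (by omega : m ≠ n)]
    have hz : ∑ i ∈ Finset.Icc 1 m,
        ((∏ k ∈ Finset.Icc 1 (m - 1), (a i + b k + 1)) /
            ∏ k ∈ (Finset.Icc 1 m).erase i, (a i - a k)) *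
          ∑ j ∈ Finset.Icc 1 n,
            ((∏ k ∈ Finset.Icc 1 (n - 1), (b j + a k + 1)) /
              ∏ k ∈ (Finset.Icc 1 n).erase j, (b j - b k)) * (1 / (a i + b j + 1)) = 0 := by
      have hcomm : ∑ i ∈ Finset.Icc 1 m,
          ((∏ k ∈ Finset.Icc 1 (m - 1), (a i + b k + 1)) /
              ∏ k ∈ (Finset.Icc 1 m).erase i, (a i - a k)) *
            ∑ j ∈ Finset.Icc 1 n,
              ((∏ k ∈ Finset.Icc 1 (n - 1), (b j + a k + 1)) /
                ∏ k ∈ (Finset.Icc 1 n).erase j, (b j - b k)) * (1 / (a i + b j + 1))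
          = ∑ j ∈ Finset.Icc 1 n,
              ((∏ k ∈ Finset.Icc 1 (n - 1), (b j + a k + 1)) /
                ∏ k ∈ (Finset.Icc 1 n).erase j, (b j - b k)) *
              ∑ i ∈ Finset.Icc 1 m,
                ((∏ k ∈ Finset.Icc 1 (m - 1), (a i + b k + 1)) /
                  ∏ k ∈ (Finset.Icc 1 m).erase i, (a i - a k)) * (1 / (b j + a i + 1)) := by
        simp only [Finset.mul_sum]
        rw [Finset.sum_comm]
        exact Finset.sum_congr rfl fun j _ => Finset.sum_congr rfl fun i _ => by ring
      rw [hcomm]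
      refine Finset.sum_eq_zero fun j hj => ?_
      rw [Finset.mem_Icc] at hj
      rw [key_sum b a m hm (fun p q hp1 _ hq1 _ hne => ha p q hp1 hq1 hne) (b j)
        (fun p hp1 _ => ne_of_gt (by linarith [hrpos p j hp1 hj.1]))]
      have h0 : (∏ k ∈ Finset.Icc 1 (m-1), (b j - b k)) = 0 :=
        Finset.prod_eq_zero (show j ∈ Finset.Icc 1 (m-1) from
          Finset.mem_Icc.2 ⟨hj.1, by omega⟩) (sub_self (b j))
      rw [h0, zero_div, mul_zero]
    rw [hz, mul_zero]
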